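/- arXiv:2009.08332 — 3 statements merged into one kernel-verified Lean document; each statement's English description precedes it below -/
import Mathlib

section
/- Let U*(x) = K̄x + b̄ be the affine candidate defined by a full-row-rank active set A as in Lemma 1, and let λ*(x) = −(G^A H⁻¹(G^A)')⁻¹(S^A x + w^A). Then for any x ∈ ℝⁿ, the pair (U*(x), λ*(x)) satisfies the KKT conditions of the inequality-constrained QP min_U (1/2)U'HU + x'FU s.t. GU ≤ w + Ex if and only if G^I U*(x) ≤ w^I + E^I x and λ*(x) ≥ 0, where I = {1,...,q} \ A; these two conditions are exactly the inequalities T* x ≤ d* defining the polytope P* of Lemma 1. -/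
open Matrix

/-!
Write `M = G^A H⁻¹ (G^A)'`, positive definite because `G^A` has independent rows. By construction
`H U* + F' x + (G^A)' λ* = 0`, and `G^A U* = M M⁻¹ (S^A x + w^A) - G^A H⁻¹ F' x = E^A x + w^A`, so
the active constraints are tight. Stationarity and complementary slackness therefore hold for every
`x`, and the KKT conditions reduce to primal feasibility on `I` and `λ* ≥ 0`. Both slacks are affine
in `x`: they are the two blocks of `d* - T* x`.
-/

def extendByZero {ι R : Type*} [DecidableEq ι] [Zero R] (A : Finset ι) (v : A → R) : ι → R :=
  fun i => if h : i ∈ A then v ⟨i, h⟩ else 0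

section ExtendByZero

variable {ι m R : Type*} [Fintype ι] [DecidableEq ι] {A : Finset ι}

theorem mulVec_extendByZero [NonUnitalNonAssocSemiring R] (B : Matrix m ι R) (v : A → R) :
    B *ᵥ extendByZero A v = B.submatrix id (↑) *ᵥ v := by
  ext k
  simp only [mulVec, dotProduct, extendByZero, mul_dite, mul_zero, submatrix_apply, id]
  rw [Finset.univ_eq_attach]
  exact (Finset.sum_attach_eq_sum_dite A fun j => B k j * v j).symm

theorem kkt_iff_of_active_eq [Ring R] [Preorder R] {g w e : ι → R} (ν : A → R)
    (hact : ∀ i ∈ A, g i = w i + e i) :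
    ((∀ i, g i ≤ w i + e i) ∧ (∀ i, 0 ≤ extendByZero A ν i) ∧
        (∀ i, extendByZero A ν i * (g i - w i - e i) = 0)) ↔
      (∀ i : ↥Aᶜ, g i ≤ w i + e i) ∧ ∀ i, 0 ≤ ν i := by
  constructor
  · rintro ⟨hfeas, hdual, -⟩
    refine ⟨fun i => hfeas i, fun i => ?_⟩
    simpa [extendByZero] using hdual i
  · rintro ⟨hfeas, hdual⟩
    refine ⟨fun i => ?_, fun i => ?_, fun i => ?_⟩ <;> by_cases hi : i ∈ A
    · exact (hact i hi).le
    · exact hfeas ⟨i, Finset.mem_compl.mpr hi⟩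
    · simpa [extendByZero, hi] using hdual ⟨i, hi⟩
    · simp [extendByZero, hi]
    · simp [extendByZero, hi, hact i hi]
    · simp [extendByZero, hi]

end ExtendByZero

theorem fromRows_mulVec_le_sumElim_iff {m₁ m₂ n R : Type*} [Fintype n]
    [NonUnitalNonAssocSemiring R] [LE R]
    (T₁ : Matrix m₁ n R) (T₂ : Matrix m₂ n R) (d₁ : m₁ → R) (d₂ : m₂ → R) (x : n → R) :
    (∀ j, (fromRows T₁ T₂ *ᵥ x) j ≤ Sum.elim d₁ d₂ j) ↔
      (∀ i, (T₁ *ᵥ x) i ≤ d₁ i) ∧ ∀ i, (T₂ *ᵥ x) i ≤ d₂ i :=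
  Sum.forall

theorem posDef_mul_inv_mul_transpose {m a : Type*} [Fintype m] [DecidableEq m] [Fintype a]
    {H : Matrix m m ℝ} (hH : H.PosDef) {B : Matrix a m ℝ} (hB : LinearIndependent ℝ B) :
    (B * H⁻¹ * Bᵀ).PosDef := by
  simpa [conjTranspose_eq_transpose_of_trivial] using
    hH.inv.mul_mul_conjTranspose_same (vecMul_injective_iff.mpr hB)

section AffineCandidate

variable {m p a R : Type*} [Fintype m] [DecidableEq m] [Fintype p] [Fintype a] [DecidableEq a]
  [CommRing R] (H : Matrix m m R) (F : Matrix p m R) (B : Matrix a m R) (M : Matrix a a R)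
  (SA : Matrix a p R) (c : a → R) (x : p → R)

theorem candidate_mulVec_eq :
    (H⁻¹ * Bᵀ * M⁻¹ * SA - H⁻¹ * Fᵀ) *ᵥ x + (H⁻¹ * Bᵀ * M⁻¹) *ᵥ c =
      H⁻¹ *ᵥ (Bᵀ *ᵥ (M⁻¹ *ᵥ (SA *ᵥ x + c)) - Fᵀ *ᵥ x) := by
  simp only [sub_mulVec, ← mulVec_mulVec, mulVec_add, mulVec_sub]
  abel

theorem candidate_stationary (hH : IsUnit H.det) :
    H *ᵥ ((H⁻¹ * Bᵀ * M⁻¹ * SA - H⁻¹ * Fᵀ) *ᵥ x + (H⁻¹ * Bᵀ * M⁻¹) *ᵥ c) + Fᵀ *ᵥ x +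
      Bᵀ *ᵥ -(M⁻¹ *ᵥ (SA *ᵥ x + c)) = 0 := by
  rw [candidate_mulVec_eq, mulVec_mulVec, mul_nonsing_inv _ hH, one_mulVec, mulVec_neg]
  abel

theorem candidate_active {C : Matrix a p R} (hSA : SA = C + B * H⁻¹ * Fᵀ)
    (hM : M = B * H⁻¹ * Bᵀ) (hMdet : IsUnit M.det) :
    B *ᵥ ((H⁻¹ * Bᵀ * M⁻¹ * SA - H⁻¹ * Fᵀ) *ᵥ x + (H⁻¹ * Bᵀ * M⁻¹) *ᵥ c) = C *ᵥ x + c := by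
  have hMM : B *ᵥ (H⁻¹ *ᵥ (Bᵀ *ᵥ (M⁻¹ *ᵥ (SA *ᵥ x + c)))) = SA *ᵥ x + c := by
    rw [mulVec_mulVec, mulVec_mulVec, mulVec_mulVec, ← hM, mul_nonsing_inv _ hMdet, one_mulVec]
  rw [candidate_mulVec_eq, mulVec_sub, mulVec_sub, hMM, hSA]
  simp only [add_mulVec, ← mulVec_mulVec]
  abel

theorem candidate_slack_eq {l : Type*} {D : Matrix l m R} {C SI : Matrix l p R} (d : l → R)
    (hSI : SI = C + D * H⁻¹ * Fᵀ) :
    d + C *ᵥ x - D *ᵥ ((H⁻¹ * Bᵀ * M⁻¹ * SA - H⁻¹ * Fᵀ) *ᵥ x + (H⁻¹ * Bᵀ * M⁻¹) *ᵥ c) =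
      -((D * H⁻¹ * Bᵀ * M⁻¹) *ᵥ c - d) - (D * H⁻¹ * Bᵀ * M⁻¹ * SA - SI) *ᵥ x := by
  rw [candidate_mulVec_eq, hSI]
  simp only [mulVec_sub, sub_mulVec, add_mulVec, ← mulVec_mulVec, mulVec_add]
  abel

end AffineCandidate

/-- the pair (U*(x), λ*(x)) satisfies the KKT conditions of the
inequality-constrained QP iff the inactive constraints and dual feasibility hold,
and these conditions are exactly the inequalities T*x ≤ d* of Lemma 1. -/
theorem stmt5 {N n q : ℕ}
    (H : Matrix (Fin N) (Fin N) ℝ) (F : Matrix (Fin n) (Fin N) ℝ)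
    (G : Matrix (Fin q) (Fin N) ℝ) (w : Fin q → ℝ) (E : Matrix (Fin q) (Fin n) ℝ)
    (hH : H.PosDef) (A : Finset (Fin q))
    (hrank : LinearIndependent ℝ (fun i : A => G (i : Fin q)))
    (GA : Matrix A (Fin N) ℝ) (hGA : GA = G.submatrix (fun i : A => (i : Fin q)) id)
    (EA : Matrix A (Fin n) ℝ) (hEA : EA = E.submatrix (fun i : A => (i : Fin q)) id)
    (wA : A → ℝ) (hwA : wA = fun i : A => w (i : Fin q))
    (GI : Matrix (Aᶜ : Finset (Fin q)) (Fin N) ℝ)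
    (hGI : GI = G.submatrix (fun i : (Aᶜ : Finset (Fin q)) => (i : Fin q)) id)
    (EI : Matrix (Aᶜ : Finset (Fin q)) (Fin n) ℝ)
    (hEI : EI = E.submatrix (fun i : (Aᶜ : Finset (Fin q)) => (i : Fin q)) id)
    (wI : (Aᶜ : Finset (Fin q)) → ℝ) (hwI : wI = fun i : (Aᶜ : Finset (Fin q)) => w (i : Fin q))
    (S : Matrix (Fin q) (Fin n) ℝ) (hS : S = E + G * H⁻¹ * Fᵀ)
    (SA : Matrix A (Fin n) ℝ) (hSA : SA = S.submatrix (fun i : A => (i : Fin q)) id)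
    (SI : Matrix (Aᶜ : Finset (Fin q)) (Fin n) ℝ)
    (hSI : SI = S.submatrix (fun i : (Aᶜ : Finset (Fin q)) => (i : Fin q)) id)
    (M : Matrix A A ℝ) (hM : M = GA * H⁻¹ * GAᵀ)
    (Kb : Matrix (Fin N) (Fin n) ℝ)
    (hKb : Kb = H⁻¹ * GAᵀ * M⁻¹ * SA - H⁻¹ * Fᵀ)
    (bb : Fin N → ℝ) (hbb : bb = (H⁻¹ * GAᵀ * M⁻¹) *ᵥ wA)
    (lam : (Fin n → ℝ) → (A → ℝ))
    (hlam : ∀ x, lam x = -(M⁻¹ *ᵥ (SA *ᵥ x + wA)))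
    (Tst : Matrix ((Aᶜ : Finset (Fin q)) ⊕ A) (Fin n) ℝ)
    (hTst : Tst = Matrix.fromRows (GI * H⁻¹ * GAᵀ * M⁻¹ * SA - SI) (M⁻¹ * SA))
    (dst : ((Aᶜ : Finset (Fin q)) ⊕ A) → ℝ)
    (hdst : dst = Sum.elim (-(((GI * H⁻¹ * GAᵀ * M⁻¹) *ᵥ wA) - wI)) (-(M⁻¹ *ᵥ wA))) :
    ∀ x : Fin n → ℝ,
      -- the full multiplier: λ*(x) on A, zero on the inactive set I
      ∀ lamq : Fin q → ℝ,
        (lamq = fun i => if h : i ∈ A then lam x ⟨i, h⟩ else 0) →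
        (((H *ᵥ (Kb *ᵥ x + bb) + Fᵀ *ᵥ x + Gᵀ *ᵥ lamq = 0) ∧
          (∀ i, (G *ᵥ (Kb *ᵥ x + bb)) i ≤ w i + (E *ᵥ x) i) ∧
          (∀ i, 0 ≤ lamq i) ∧
          (∀ i, lamq i * ((G *ᵥ (Kb *ᵥ x + bb)) i - w i - (E *ᵥ x) i) = 0)) ↔
         ((∀ i, (GI *ᵥ (Kb *ᵥ x + bb)) i ≤ wI i + (EI *ᵥ x) i) ∧
          (∀ i, 0 ≤ lam x i))) ∧
        (((∀ i, (GI *ᵥ (Kb *ᵥ x + bb)) i ≤ wI i + (EI *ᵥ x) i) ∧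
          (∀ i, 0 ≤ lam x i)) ↔
         (∀ j, (Tst *ᵥ x) j ≤ dst j)) := by
  subst hKb hbb hTst hdst
  obtain rfl : lam = fun x => -(M⁻¹ *ᵥ (SA *ᵥ x + wA)) := funext hlam
  intro x lamq hlamq
  have hMdet : IsUnit M.det := by
    subst hM hGA
    exact isUnit_iff_ne_zero.mpr (posDef_mul_inv_mul_transpose hH hrank).det_pos.ne'
  have hSA' : SA = EA + GA * H⁻¹ * Fᵀ := by subst hSA hS hEA hGA; rfl
  have hSI' : SI = EI + GI * H⁻¹ * Fᵀ := by subst hSI hS hEI hGI; rfl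
  set U := (H⁻¹ * GAᵀ * M⁻¹ * SA - H⁻¹ * Fᵀ) *ᵥ x + (H⁻¹ * GAᵀ * M⁻¹) *ᵥ wA
  have hstat : H *ᵥ U + Fᵀ *ᵥ x + Gᵀ *ᵥ lamq = 0 := by
    have hGt : Gᵀ.submatrix id (↑) = GAᵀ := by subst hGA; rfl
    rw [show lamq = extendByZero A _ from hlamq, mulVec_extendByZero, hGt]
    exact candidate_stationary H F GA M SA wA x (isUnit_iff_ne_zero.mpr hH.det_pos.ne')
  have hact : ∀ i ∈ A, (G *ᵥ U) i = w i + (E *ᵥ x) i := by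
    intro i hi
    have := congrFun (candidate_active H F GA M SA wA x hSA' hM hMdet) ⟨i, hi⟩
    subst hGA hEA hwA
    rw [add_comm]
    exact this
  refine ⟨?_, ?_⟩
  · subst hlamq hGI hEI hwI
    exact (and_iff_right hstat).trans (kkt_iff_of_active_eq _ hact)
  · rw [fromRows_mulVec_le_sumElim_iff]
    refine and_congr ?_ ?_
    · change GI *ᵥ U ≤ wI + EI *ᵥ x ↔ _ *ᵥ x ≤ _
      rw [← sub_nonneg, candidate_slack_eq H F GA M SA wA x wI hSI', sub_nonneg]
    · change 0 ≤ -(M⁻¹ *ᵥ (SA *ᵥ x + wA)) ↔ (M⁻¹ * SA) *ᵥ x ≤ -(M⁻¹ *ᵥ wA)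
      rw [neg_nonneg, mulVec_add, ← mulVec_mulVec, le_neg_iff_add_nonpos_right]
end

section
/- Lemma 1 of the paper: Let x₀ be a feasible parameter of the QP min_U (1/2)U'HU + x'FU s.t. GU ≤ w + Ex with H ≻ 0, let A = A(x₀) be its optimal active set, and assume G^A has full row rank and the associated multiplier λ*(x₀) = −(G^A H⁻¹(G^A)')⁻¹(S^A x₀ + w^A) has strictly nonnegative components. Define K̄, b̄, T*, d* as in the paper. Then for every x in the polytope P* = {x : T*x ≤ d*}, the point U*(x) = K̄x + b̄ is the unique optimal solution of the QP with parameter x. -/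
/-!
Put `lam = (G^A H⁻¹ (G^A)')⁻¹ (S^A x + w^A)`. Then `K̄x + b̄ = H⁻¹((G^A)' lam − F'x) =: U`, so
`U` makes the constraints of `A` active and satisfies `HU + F'x = (G^A)' lam`; the two row blocks
of `T*x ≤ d*` say exactly that `U` satisfies the other constraints and that `lam ≤ 0`. Hence
`(U, −lam)` is a KKT pair, and for a KKT pair the cost `J` expands on the feasible set as
`J(V) = J(U) + (−lam)'(w^A + E^A x − G^A V) + ½ (V − U)'H(V − U) ≥ J(U) + ½ (V − U)'H(V − U)`,
which gives optimality and, since `H ≻ 0`, uniqueness.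
-/

open Matrix

theorem submatrix_id_mulVec_apply {k m ι α : Type*} [Fintype k] [NonUnitalNonAssocSemiring α]
    (G : Matrix m k α) (e : ι → m) (v : k → α) (i : ι) :
    (G.submatrix e id *ᵥ v) i = (G *ᵥ v) (e i) :=
  rfl

theorem submatrix_id_mul {k m ι n α : Type*} [Fintype k] [NonUnitalNonAssocSemiring α]
    (G : Matrix m k α) (e : ι → m) (B : Matrix k n α) :
    G.submatrix e id * B = (G * B).submatrix e id := by
  ext; simp [mul_apply]

section QuadraticProgram

variable {k p m ι : Type*} [Fintype k] [Fintype p] [Fintype ι]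

noncomputable def qpObjective (H : Matrix k k ℝ) (F : Matrix p k ℝ) (x : p → ℝ) (V : k → ℝ) : ℝ :=
  (1/2) * (V ⬝ᵥ (H *ᵥ V)) + x ⬝ᵥ (F *ᵥ V)

theorem qpObjective_eq_add {H : Matrix k k ℝ} (hH : H.IsHermitian) (F : Matrix p k ℝ)
    (x : p → ℝ) (U V : k → ℝ) :
    qpObjective H F x V = qpObjective H F x U + (H *ᵥ U + Fᵀ *ᵥ x) ⬝ᵥ (V - U)
      + (1/2) * ((V - U) ⬝ᵥ (H *ᵥ (V - U))) := by
  have hsymm : ∀ y z : k → ℝ, y ⬝ᵥ (H *ᵥ z) = z ⬝ᵥ (H *ᵥ y) := fun y z => by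
    rw [dotProduct_mulVec, ← mulVec_transpose, ← conjTranspose_eq_transpose_of_trivial, hH,
      dotProduct_comm]
  have hF : (Fᵀ *ᵥ x) ⬝ᵥ (V - U) = x ⬝ᵥ (F *ᵥ V) - x ⬝ᵥ (F *ᵥ U) := by
    rw [mulVec_transpose, ← dotProduct_mulVec, mulVec_sub, dotProduct_sub]
  rw [add_dotProduct, hF, dotProduct_comm (H *ᵥ U), hsymm (V - U)]
  simp only [qpObjective, mulVec_sub, dotProduct_sub, sub_dotProduct, hsymm U V]
  ring

theorem qpObjective_add_le_of_kkt {H : Matrix k k ℝ} (hH : H.IsHermitian)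
    {F : Matrix p k ℝ} {x : p → ℝ} {G : Matrix m k ℝ} {b : m → ℝ} {e : ι → m} {U : k → ℝ}
    {μ : ι → ℝ} (hμ : 0 ≤ μ) (hact : ∀ i, (G *ᵥ U) (e i) = b (e i))
    (hstat : H *ᵥ U + Fᵀ *ᵥ x = -(μ ᵥ* G.submatrix e id)) {V : k → ℝ}
    (hV : ∀ j, (G *ᵥ V) j ≤ b j) :
    qpObjective H F x U + (1/2) * ((V - U) ⬝ᵥ (H *ᵥ (V - U))) ≤ qpObjective H F x V := by
  have hslack : μ ⬝ᵥ (G.submatrix e id *ᵥ (V - U)) ≤ 0 :=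
    Finset.sum_nonpos fun i _ => mul_nonpos_of_nonneg_of_nonpos (hμ i) <| by
      simpa [mulVec_sub, submatrix_id_mulVec_apply, hact] using hV (e i)
  rw [qpObjective_eq_add hH F x U V, hstat, neg_dotProduct, ← dotProduct_mulVec]
  linarith

theorem qpObjective_le_of_kkt {H : Matrix k k ℝ} (hH : H.PosSemidef)
    {F : Matrix p k ℝ} {x : p → ℝ} {G : Matrix m k ℝ} {b : m → ℝ} {e : ι → m} {U : k → ℝ}
    {μ : ι → ℝ} (hμ : 0 ≤ μ) (hact : ∀ i, (G *ᵥ U) (e i) = b (e i))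
    (hstat : H *ᵥ U + Fᵀ *ᵥ x = -(μ ᵥ* G.submatrix e id)) {V : k → ℝ}
    (hV : ∀ j, (G *ᵥ V) j ≤ b j) :
    qpObjective H F x U ≤ qpObjective H F x V := by
  have := qpObjective_add_le_of_kkt hH.isHermitian hμ hact hstat hV
  have := hH.dotProduct_mulVec_nonneg (V - U)
  simp only [star_trivial] at this
  linarith

theorem eq_of_kkt_of_qpObjective_le {H : Matrix k k ℝ} (hH : H.PosDef)
    {F : Matrix p k ℝ} {x : p → ℝ} {G : Matrix m k ℝ} {b : m → ℝ} {e : ι → m} {U : k → ℝ}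
    {μ : ι → ℝ} (hμ : 0 ≤ μ) (hact : ∀ i, (G *ᵥ U) (e i) = b (e i))
    (hstat : H *ᵥ U + Fᵀ *ᵥ x = -(μ ᵥ* G.submatrix e id)) {V : k → ℝ}
    (hV : ∀ j, (G *ᵥ V) j ≤ b j) (hle : qpObjective H F x V ≤ qpObjective H F x U) :
    V = U := by
  by_contra hne
  have := qpObjective_add_le_of_kkt hH.isHermitian hμ hact hstat hV
  have := hH.dotProduct_mulVec_pos (sub_ne_zero.mpr hne)
  simp only [star_trivial] at this
  linarith

end QuadraticProgram

section ActiveSetSolution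

variable {k p m ι κ : Type*} [Fintype k] [Fintype p] [DecidableEq k] [Fintype ι]

theorem mulVec_inv_mulVec_sub {H : Matrix k k ℝ} {F : Matrix p k ℝ} {G : Matrix m k ℝ}
    {E S : Matrix m p ℝ} (hS : S = E + G * H⁻¹ * Fᵀ) (GA : Matrix ι k ℝ) (lam : ι → ℝ)
    (x : p → ℝ) :
    G *ᵥ (H⁻¹ *ᵥ (GAᵀ *ᵥ lam - Fᵀ *ᵥ x)) = (G * H⁻¹ * GAᵀ) *ᵥ lam - S *ᵥ x + E *ᵥ x := by
  simp only [hS, add_mulVec, mulVec_sub, mulVec_mulVec, Matrix.mul_assoc]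
  abel

variable [DecidableEq ι]

theorem isUnit_det_mul_inv_mul_transpose {H : Matrix k k ℝ} (hH : H.PosDef) {B : Matrix ι k ℝ}
    (hB : LinearIndependent ℝ B.row) : IsUnit (B * H⁻¹ * Bᵀ).det := by
  have hpos := hH.inv.mul_mul_conjTranspose_same (vecMul_injective_iff.mpr hB)
  rw [conjTranspose_eq_transpose_of_trivial] at hpos
  exact (isUnit_iff_isUnit_det _).mp hpos.isUnit

theorem mulVec_add_eq_inv_mulVec_sub {H : Matrix k k ℝ} {F : Matrix p k ℝ} {GA : Matrix ι k ℝ}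
    {SA : Matrix ι p ℝ} {M : Matrix ι ι ℝ} {wA : ι → ℝ} {K : Matrix k p ℝ} {b : k → ℝ}
    (hK : K = H⁻¹ * GAᵀ * M⁻¹ * SA - H⁻¹ * Fᵀ) (hb : b = (H⁻¹ * GAᵀ * M⁻¹) *ᵥ wA)
    (x : p → ℝ) :
    K *ᵥ x + b = H⁻¹ *ᵥ (GAᵀ *ᵥ (M⁻¹ *ᵥ (SA *ᵥ x + wA)) - Fᵀ *ᵥ x) := by
  simp only [hK, hb, sub_mulVec, mulVec_sub, mulVec_add, mulVec_mulVec, Matrix.mul_assoc]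
  abel

theorem mulVec_mul_inv_mulVec_apply {H : Matrix k k ℝ} {G : Matrix m k ℝ} {e : ι → m}
    {GA : Matrix ι k ℝ} {M : Matrix ι ι ℝ} (hGA : GA = G.submatrix e id)
    (hM : M = GA * H⁻¹ * GAᵀ) (hMu : IsUnit M.det) (y : ι → ℝ) (i : ι) :
    ((G * H⁻¹ * GAᵀ) *ᵥ (M⁻¹ *ᵥ y)) (e i) = y i := by
  have hrows : (G * H⁻¹ * GAᵀ).submatrix e id = M := by
    rw [hM, hGA, submatrix_id_mul, submatrix_id_mul]
  rw [← submatrix_id_mulVec_apply, hrows, mulVec_mulVec, mul_nonsing_inv _ hMu, one_mulVec]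

theorem fromRows_mulVec_le_iff {H : Matrix k k ℝ} {G : Matrix m k ℝ} {S : Matrix m p ℝ}
    {w : m → ℝ} {f : κ → m} {GA : Matrix ι k ℝ} {SA : Matrix ι p ℝ} {M : Matrix ι ι ℝ} {wA : ι → ℝ}
    {GI : Matrix κ k ℝ} {SI : Matrix κ p ℝ} {wI : κ → ℝ} {T : Matrix (κ ⊕ ι) p ℝ}
    {d : κ ⊕ ι → ℝ} (hGI : GI = G.submatrix f id) (hSI : SI = S.submatrix f id)
    (hwI : wI = fun i => w (f i))
    (hT : T = fromRows (GI * H⁻¹ * GAᵀ * M⁻¹ * SA - SI) (M⁻¹ * SA))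
    (hd : d = Sum.elim (-((GI * H⁻¹ * GAᵀ * M⁻¹) *ᵥ wA - wI)) (-(M⁻¹ *ᵥ wA))) (x : p → ℝ) :
    (∀ j, (T *ᵥ x) j ≤ d j) ↔
      (∀ i, ((G * H⁻¹ * GAᵀ) *ᵥ (M⁻¹ *ᵥ (SA *ᵥ x + wA)) - S *ᵥ x) (f i) ≤ w (f i)) ∧
      M⁻¹ *ᵥ (SA *ᵥ x + wA) ≤ 0 := by
  subst hGI hSI hwI hT hd
  rw [Sum.forall, Pi.le_def]
  simp only [fromRows_mulVec, Sum.elim_inl, Sum.elim_inr, sub_mulVec, Pi.sub_apply,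
    Pi.neg_apply, Pi.zero_apply, submatrix_id_mul, submatrix_id_mulVec_apply, ← mulVec_mulVec,
    mulVec_add, Pi.add_apply]
  constructor <;> rintro ⟨h1, h2⟩ <;>
    exact ⟨fun i => by linarith [h1 i], fun i => by linarith [h2 i]⟩

end ActiveSetSolution

theorem stmt7_general {N n q : ℕ}
    (H : Matrix (Fin N) (Fin N) ℝ) (F : Matrix (Fin n) (Fin N) ℝ)
    (G : Matrix (Fin q) (Fin N) ℝ) (w : Fin q → ℝ) (E : Matrix (Fin q) (Fin n) ℝ)
    (hH : H.PosDef)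
    (A : Finset (Fin q))
    (hrank : LinearIndependent ℝ (fun i : A => G (i : Fin q)))
    (GA : Matrix A (Fin N) ℝ) (hGA : GA = G.submatrix (fun i : A => (i : Fin q)) id)
    (wA : A → ℝ) (hwA : wA = fun i : A => w (i : Fin q))
    (GI : Matrix (Aᶜ : Finset (Fin q)) (Fin N) ℝ)
    (hGI : GI = G.submatrix (fun i : (Aᶜ : Finset (Fin q)) => (i : Fin q)) id)
    (wI : (Aᶜ : Finset (Fin q)) → ℝ) (hwI : wI = fun i : (Aᶜ : Finset (Fin q)) => w (i : Fin q))
    (S : Matrix (Fin q) (Fin n) ℝ) (hS : S = E + G * H⁻¹ * Fᵀ)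
    (SA : Matrix A (Fin n) ℝ) (hSA : SA = S.submatrix (fun i : A => (i : Fin q)) id)
    (SI : Matrix (Aᶜ : Finset (Fin q)) (Fin n) ℝ)
    (hSI : SI = S.submatrix (fun i : (Aᶜ : Finset (Fin q)) => (i : Fin q)) id)
    (M : Matrix A A ℝ) (hM : M = GA * H⁻¹ * GAᵀ)
    (Kb : Matrix (Fin N) (Fin n) ℝ)
    (hKb : Kb = H⁻¹ * GAᵀ * M⁻¹ * SA - H⁻¹ * Fᵀ)
    (bb : Fin N → ℝ) (hbb : bb = (H⁻¹ * GAᵀ * M⁻¹) *ᵥ wA)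
    (Tst : Matrix ((Aᶜ : Finset (Fin q)) ⊕ A) (Fin n) ℝ)
    (hTst : Tst = Matrix.fromRows (GI * H⁻¹ * GAᵀ * M⁻¹ * SA - SI) (M⁻¹ * SA))
    (dst : ((Aᶜ : Finset (Fin q)) ⊕ A) → ℝ)
    (hdst : dst = Sum.elim (-(((GI * H⁻¹ * GAᵀ * M⁻¹) *ᵥ wA) - wI)) (-(M⁻¹ *ᵥ wA))) :
    ∀ x : Fin n → ℝ, (∀ j, (Tst *ᵥ x) j ≤ dst j) →
      (∀ i, (G *ᵥ (Kb *ᵥ x + bb)) i ≤ w i + (E *ᵥ x) i) ∧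
      (∀ V : Fin N → ℝ, (∀ i, (G *ᵥ V) i ≤ w i + (E *ᵥ x) i) →
        (1/2) * ((Kb *ᵥ x + bb) ⬝ᵥ (H *ᵥ (Kb *ᵥ x + bb))) + x ⬝ᵥ (F *ᵥ (Kb *ᵥ x + bb)) ≤
        (1/2) * (V ⬝ᵥ (H *ᵥ V)) + x ⬝ᵥ (F *ᵥ V)) ∧
      (∀ V : Fin N → ℝ, (∀ i, (G *ᵥ V) i ≤ w i + (E *ᵥ x) i) →
        (∀ W : Fin N → ℝ, (∀ i, (G *ᵥ W) i ≤ w i + (E *ᵥ x) i) →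
          (1/2) * (V ⬝ᵥ (H *ᵥ V)) + x ⬝ᵥ (F *ᵥ V) ≤
          (1/2) * (W ⬝ᵥ (H *ᵥ W)) + x ⬝ᵥ (F *ᵥ W)) →
        V = Kb *ᵥ x + bb) := by
  intro x hx
  have hHu : IsUnit H.det := (isUnit_iff_isUnit_det H).mp hH.isUnit
  have hMu : IsUnit M.det := hM ▸ isUnit_det_mul_inv_mul_transpose hH (hGA ▸ hrank)
  obtain ⟨hinactive, hlam⟩ := (fromRows_mulVec_le_iff hGI hSI hwI hTst hdst x).mp hx
  set lam := M⁻¹ *ᵥ (SA *ᵥ x + wA)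
  rw [mulVec_add_eq_inv_mulVec_sub hKb hbb]
  set U := H⁻¹ *ᵥ (GAᵀ *ᵥ lam - Fᵀ *ᵥ x)
  have hGU := mulVec_inv_mulVec_sub hS GA lam x
  have hactive (i : A) : (G *ᵥ U) i = w i + (E *ᵥ x) i := by
    rw [hGU, Pi.add_apply, Pi.sub_apply, mulVec_mul_inv_mulVec_apply hGA hM hMu, hSA, hwA]
    simp [submatrix_id_mulVec_apply]
  have hfeas (i : Fin q) : (G *ᵥ U) i ≤ w i + (E *ᵥ x) i := by
    by_cases hi : i ∈ A
    · exact (hactive ⟨i, hi⟩).le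
    · have := hinactive ⟨i, Finset.mem_compl.mpr hi⟩
      rw [hGU, Pi.add_apply]
      linarith
  have hstat : H *ᵥ U + Fᵀ *ᵥ x = -((-lam) ᵥ* G.submatrix (fun i : A => (i : Fin q)) id) := by
    rw [← hGA, neg_vecMul, neg_neg, ← mulVec_transpose]
    simp [U, mulVec_mulVec, mul_nonsing_inv _ hHu]
  have hμ : 0 ≤ -lam := neg_nonneg.mpr hlam
  exact ⟨hfeas, fun V hV => qpObjective_le_of_kkt hH.posSemidef hμ hactive hstat hV,
    fun V hV hopt => eq_of_kkt_of_qpObjective_le hH hμ hactive hstat hV (hopt U hfeas)⟩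

/-- Lemma 1 of the paper. On the polytope P* = {x : T*x ≤ d*},
U*(x) = K̄x + b̄ is the unique optimal solution of the parametric QP. -/
theorem stmt7 {N n q : ℕ}
    (H : Matrix (Fin N) (Fin N) ℝ) (F : Matrix (Fin n) (Fin N) ℝ)
    (G : Matrix (Fin q) (Fin N) ℝ) (w : Fin q → ℝ) (E : Matrix (Fin q) (Fin n) ℝ)
    (hH : H.PosDef)
    (x0 : Fin n → ℝ) (U0 : Fin N → ℝ)
    (hU0feas : ∀ i, (G *ᵥ U0) i ≤ w i + (E *ᵥ x0) i)
    (hU0opt : ∀ V : Fin N → ℝ, (∀ i, (G *ᵥ V) i ≤ w i + (E *ᵥ x0) i) →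
        (1/2) * (U0 ⬝ᵥ (H *ᵥ U0)) + x0 ⬝ᵥ (F *ᵥ U0) ≤
        (1/2) * (V ⬝ᵥ (H *ᵥ V)) + x0 ⬝ᵥ (F *ᵥ V))
    (A : Finset (Fin q))
    (hA : ∀ i, i ∈ A ↔ (G *ᵥ U0) i = w i + (E *ᵥ x0) i)
    (hrank : LinearIndependent ℝ (fun i : A => G (i : Fin q)))
    (GA : Matrix A (Fin N) ℝ) (hGA : GA = G.submatrix (fun i : A => (i : Fin q)) id)
    (wA : A → ℝ) (hwA : wA = fun i : A => w (i : Fin q))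
    (GI : Matrix (Aᶜ : Finset (Fin q)) (Fin N) ℝ)
    (hGI : GI = G.submatrix (fun i : (Aᶜ : Finset (Fin q)) => (i : Fin q)) id)
    (wI : (Aᶜ : Finset (Fin q)) → ℝ) (hwI : wI = fun i : (Aᶜ : Finset (Fin q)) => w (i : Fin q))
    (S : Matrix (Fin q) (Fin n) ℝ) (hS : S = E + G * H⁻¹ * Fᵀ)
    (SA : Matrix A (Fin n) ℝ) (hSA : SA = S.submatrix (fun i : A => (i : Fin q)) id)
    (SI : Matrix (Aᶜ : Finset (Fin q)) (Fin n) ℝ)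
    (hSI : SI = S.submatrix (fun i : (Aᶜ : Finset (Fin q)) => (i : Fin q)) id)
    (M : Matrix A A ℝ) (hM : M = GA * H⁻¹ * GAᵀ)
    -- nonnegativity of the multiplier at x0
    (hlam0 : ∀ i : A, 0 ≤ (-(M⁻¹ *ᵥ (SA *ᵥ x0 + wA))) i)
    (Kb : Matrix (Fin N) (Fin n) ℝ)
    (hKb : Kb = H⁻¹ * GAᵀ * M⁻¹ * SA - H⁻¹ * Fᵀ)
    (bb : Fin N → ℝ) (hbb : bb = (H⁻¹ * GAᵀ * M⁻¹) *ᵥ wA)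
    (Tst : Matrix ((Aᶜ : Finset (Fin q)) ⊕ A) (Fin n) ℝ)
    (hTst : Tst = Matrix.fromRows (GI * H⁻¹ * GAᵀ * M⁻¹ * SA - SI) (M⁻¹ * SA))
    (dst : ((Aᶜ : Finset (Fin q)) ⊕ A) → ℝ)
    (hdst : dst = Sum.elim (-(((GI * H⁻¹ * GAᵀ * M⁻¹) *ᵥ wA) - wI)) (-(M⁻¹ *ᵥ wA))) :
    ∀ x : Fin n → ℝ, (∀ j, (Tst *ᵥ x) j ≤ dst j) →
      (∀ i, (G *ᵥ (Kb *ᵥ x + bb)) i ≤ w i + (E *ᵥ x) i) ∧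
      (∀ V : Fin N → ℝ, (∀ i, (G *ᵥ V) i ≤ w i + (E *ᵥ x) i) →
        (1/2) * ((Kb *ᵥ x + bb) ⬝ᵥ (H *ᵥ (Kb *ᵥ x + bb))) + x ⬝ᵥ (F *ᵥ (Kb *ᵥ x + bb)) ≤
        (1/2) * (V ⬝ᵥ (H *ᵥ V)) + x ⬝ᵥ (F *ᵥ V)) ∧
      (∀ V : Fin N → ℝ, (∀ i, (G *ᵥ V) i ≤ w i + (E *ᵥ x) i) →
        (∀ W : Fin N → ℝ, (∀ i, (G *ᵥ W) i ≤ w i + (E *ᵥ x) i) →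
          (1/2) * (V ⬝ᵥ (H *ᵥ V)) + x ⬝ᵥ (F *ᵥ V) ≤
          (1/2) * (W ⬝ᵥ (H *ᵥ W)) + x ⬝ᵥ (F *ᵥ W)) →
        V = Kb *ᵥ x + bb) :=
  stmt7_general H F G w E hH A hrank GA hGA wA hwA GI hGI wI hwI S hS SA hSA SI hSI M hM Kb hKb bb
    hbb Tst hTst dst hdst
end

section
/- Polytopes with disjoint interiors from distinct optimal active sets: if x lies in the interior of both P₁* and P₂* (regions from Lemma 1 for full-row-rank active sets A₁ ≠ A₂, each with strictly positive multipliers and strictly inactive non-active constraints at x), then A₁ = A₂. Equivalently, at a parameter x where all multipliers of active constraints are strictly positive and all inactive constraints hold strictly, the optimal active set is uniquely determined. -/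
/-!
The optimizer of a strictly convex QP is unique: if `U₁ ≠ U₂` were both optimal, the
positive-definite quadratic term would make their midpoint, which is feasible, strictly
cheaper. Since the inactive constraints hold strictly, each active set is exactly the set
of constraints tight at the common optimizer.
-/

open Matrix

section Quadratic

variable {n : Type*} [Fintype n]

lemma Matrix.IsSymm.dotProduct_mulVec_comm {H : Matrix n n ℝ} (hH : H.IsSymm) (u v : n → ℝ) :
    u ⬝ᵥ (H *ᵥ v) = v ⬝ᵥ (H *ᵥ u) := by
  rw [dotProduct_mulVec, ← mulVec_transpose, hH.eq, dotProduct_comm]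

lemma Matrix.IsSymm.dotProduct_mulVec_convex_combination {H : Matrix n n ℝ} (hH : H.IsSymm)
    (u v : n → ℝ) {a b : ℝ} (hab : a + b = 1) :
    a * (u ⬝ᵥ (H *ᵥ u)) + b * (v ⬝ᵥ (H *ᵥ v)) =
      (a • u + b • v) ⬝ᵥ (H *ᵥ (a • u + b • v)) + a * b * ((u - v) ⬝ᵥ (H *ᵥ (u - v))) := by
  simp only [mulVec_add, mulVec_smul, mulVec_sub, dotProduct_add, add_dotProduct,
    dotProduct_smul, smul_dotProduct, dotProduct_sub, sub_dotProduct, smul_eq_mul]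
  rw [hH.dotProduct_mulVec_comm v u, show b = 1 - a by linarith]
  ring

variable {m : Type*} [Fintype m]

noncomputable def qpCost (H : Matrix n n ℝ) (F : Matrix m n ℝ) (x : m → ℝ) (V : n → ℝ) : ℝ :=
  (1/2) * (V ⬝ᵥ (H *ᵥ V)) + x ⬝ᵥ (F *ᵥ V)

lemma Matrix.PosDef.strictConvexOn_qpCost {H : Matrix n n ℝ} (hH : H.PosDef)
    (F : Matrix m n ℝ) (x : m → ℝ) : StrictConvexOn ℝ Set.univ (qpCost H F x) := by
  have hsymm : H.IsSymm := isHermitian_iff_isSymm.mp hH.1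
  refine ⟨convex_univ, fun u _ v _ huv a b ha hb hab => ?_⟩
  have hpos : 0 < (u - v) ⬝ᵥ (H *ᵥ (u - v)) := by
    simpa using hH.dotProduct_mulVec_pos (sub_ne_zero.mpr huv)
  have hcombo := hsymm.dotProduct_mulVec_convex_combination u v hab
  have hlin : x ⬝ᵥ (F *ᵥ (a • u + b • v)) = a * (x ⬝ᵥ (F *ᵥ u)) + b * (x ⬝ᵥ (F *ᵥ v)) := by
    simp only [mulVec_add, mulVec_smul, dotProduct_add, dotProduct_smul, smul_eq_mul]
  simp only [qpCost, smul_eq_mul, hlin]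
  nlinarith [mul_pos (mul_pos ha hb) hpos]

end Quadratic

section Polyhedron

variable {ι n : Type*} [Fintype n]

lemma convex_setOf_forall_mulVec_le (G : Matrix ι n ℝ) (r : ι → ℝ) :
    Convex ℝ {V : n → ℝ | ∀ i, (G *ᵥ V) i ≤ r i} :=
  convex_halfSpace_le (Matrix.mulVecLin G).isLinear r

variable [Fintype ι]

noncomputable def activeSet (G : Matrix ι n ℝ) (r : ι → ℝ) (V : n → ℝ) : Finset ι :=
  {i | (G *ᵥ V) i = r i}

lemma eq_activeSet {G : Matrix ι n ℝ} {r : ι → ℝ} {V : n → ℝ} {A : Finset ι}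
    (hact : ∀ i ∈ A, (G *ᵥ V) i = r i) (hinact : ∀ i ∉ A, (G *ᵥ V) i < r i) :
    A = activeSet G r V := by
  ext i
  simp only [activeSet, Finset.mem_filter, Finset.mem_univ, true_and]
  by_cases hi : i ∈ A
  · exact iff_of_true hi (hact i hi)
  · exact iff_of_false hi (hinact i hi).ne

end Polyhedron

theorem stmt17_general {N n q : ℕ}
    (H : Matrix (Fin N) (Fin N) ℝ) (F : Matrix (Fin n) (Fin N) ℝ)
    (G : Matrix (Fin q) (Fin N) ℝ) (w : Fin q → ℝ) (E : Matrix (Fin q) (Fin n) ℝ)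
    (x : Fin n → ℝ) (hH : H.PosDef)
    (A1 A2 : Finset (Fin q))
    (K1 K2 : Matrix (Fin N) (Fin n) ℝ) (b1 b2 : Fin N → ℝ)
    -- law 1 is optimal at x with active set exactly A1 and strict complementarity
    (h1feas : ∀ i, (G *ᵥ (K1 *ᵥ x + b1)) i ≤ w i + (E *ᵥ x) i)
    (h1opt : ∀ V : Fin N → ℝ, (∀ i, (G *ᵥ V) i ≤ w i + (E *ᵥ x) i) →
        (1/2) * ((K1 *ᵥ x + b1) ⬝ᵥ (H *ᵥ (K1 *ᵥ x + b1))) + x ⬝ᵥ (F *ᵥ (K1 *ᵥ x + b1)) ≤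
        (1/2) * (V ⬝ᵥ (H *ᵥ V)) + x ⬝ᵥ (F *ᵥ V))
    (h1act : ∀ i ∈ A1, (G *ᵥ (K1 *ᵥ x + b1)) i = w i + (E *ᵥ x) i)
    (h1inact : ∀ i ∉ A1, (G *ᵥ (K1 *ᵥ x + b1)) i < w i + (E *ᵥ x) i)
    -- law 2 is optimal at x with active set exactly A2 and strict complementarity
    (h2feas : ∀ i, (G *ᵥ (K2 *ᵥ x + b2)) i ≤ w i + (E *ᵥ x) i)
    (h2opt : ∀ V : Fin N → ℝ, (∀ i, (G *ᵥ V) i ≤ w i + (E *ᵥ x) i) →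
        (1/2) * ((K2 *ᵥ x + b2) ⬝ᵥ (H *ᵥ (K2 *ᵥ x + b2))) + x ⬝ᵥ (F *ᵥ (K2 *ᵥ x + b2)) ≤
        (1/2) * (V ⬝ᵥ (H *ᵥ V)) + x ⬝ᵥ (F *ᵥ V))
    (h2act : ∀ i ∈ A2, (G *ᵥ (K2 *ᵥ x + b2)) i = w i + (E *ᵥ x) i)
    (h2inact : ∀ i ∉ A2, (G *ᵥ (K2 *ᵥ x + b2)) i < w i + (E *ᵥ x) i) :
    A1 = A2 := by
  have hconvex := (hH.strictConvexOn_qpCost F x).subset (Set.subset_univ _)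
    (convex_setOf_forall_mulVec_le G fun i => w i + (E *ᵥ x) i)
  have hU : K1 *ᵥ x + b1 = K2 *ᵥ x + b2 :=
    hconvex.eq_of_isMinOn (isMinOn_iff.mpr h1opt) (isMinOn_iff.mpr h2opt) h1feas h2feas
  rw [eq_activeSet h1act h1inact, eq_activeSet h2act h2inact, hU]

/-- at a parameter x where two affine laws are optimal with exact
active sets A₁, A₂ (strict complementarity holding for each), the optimal active
set is uniquely determined: A₁ = A₂. -/
theorem stmt17 {N n q : ℕ}
    (H : Matrix (Fin N) (Fin N) ℝ) (F : Matrix (Fin n) (Fin N) ℝ)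
    (G : Matrix (Fin q) (Fin N) ℝ) (w : Fin q → ℝ) (E : Matrix (Fin q) (Fin n) ℝ)
    (x : Fin n → ℝ) (hH : H.PosDef)
    (A1 A2 : Finset (Fin q))
    (K1 K2 : Matrix (Fin N) (Fin n) ℝ) (b1 b2 : Fin N → ℝ)
    (lam1 lam2 : Fin q → ℝ)
    -- law 1 is optimal at x with active set exactly A1 and strict complementarity
    (h1feas : ∀ i, (G *ᵥ (K1 *ᵥ x + b1)) i ≤ w i + (E *ᵥ x) i)
    (h1opt : ∀ V : Fin N → ℝ, (∀ i, (G *ᵥ V) i ≤ w i + (E *ᵥ x) i) →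
        (1/2) * ((K1 *ᵥ x + b1) ⬝ᵥ (H *ᵥ (K1 *ᵥ x + b1))) + x ⬝ᵥ (F *ᵥ (K1 *ᵥ x + b1)) ≤
        (1/2) * (V ⬝ᵥ (H *ᵥ V)) + x ⬝ᵥ (F *ᵥ V))
    (h1act : ∀ i ∈ A1, (G *ᵥ (K1 *ᵥ x + b1)) i = w i + (E *ᵥ x) i)
    (h1inact : ∀ i ∉ A1, (G *ᵥ (K1 *ᵥ x + b1)) i < w i + (E *ᵥ x) i)
    (h1stat : H *ᵥ (K1 *ᵥ x + b1) + Fᵀ *ᵥ x + Gᵀ *ᵥ lam1 = 0)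
    (h1pos : ∀ i ∈ A1, 0 < lam1 i) (h1zero : ∀ i ∉ A1, lam1 i = 0)
    -- law 2 is optimal at x with active set exactly A2 and strict complementarity
    (h2feas : ∀ i, (G *ᵥ (K2 *ᵥ x + b2)) i ≤ w i + (E *ᵥ x) i)
    (h2opt : ∀ V : Fin N → ℝ, (∀ i, (G *ᵥ V) i ≤ w i + (E *ᵥ x) i) →
        (1/2) * ((K2 *ᵥ x + b2) ⬝ᵥ (H *ᵥ (K2 *ᵥ x + b2))) + x ⬝ᵥ (F *ᵥ (K2 *ᵥ x + b2)) ≤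
        (1/2) * (V ⬝ᵥ (H *ᵥ V)) + x ⬝ᵥ (F *ᵥ V))
    (h2act : ∀ i ∈ A2, (G *ᵥ (K2 *ᵥ x + b2)) i = w i + (E *ᵥ x) i)
    (h2inact : ∀ i ∉ A2, (G *ᵥ (K2 *ᵥ x + b2)) i < w i + (E *ᵥ x) i)
    (h2stat : H *ᵥ (K2 *ᵥ x + b2) + Fᵀ *ᵥ x + Gᵀ *ᵥ lam2 = 0)
    (h2pos : ∀ i ∈ A2, 0 < lam2 i) (h2zero : ∀ i ∉ A2, lam2 i = 0) :
    A1 = A2 :=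
  stmt17_general H F G w E x hH A1 A2 K1 K2 b1 b2 h1feas h1opt h1act h1inact h2feas h2opt h2act
    h2inact
end
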